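/- Let H be a separable analytic reproducing kernel Hilbert space of E-valued functions on 𝔻, with E ≠ {0}, on which the multiplication operator M_z is bounded, and suppose the kernel is quasi-scalar: there exist complex numbers a_{m,n} (m, n ∈ ℕ) such that ⟨K_{m,ζ}, K_{n,η}⟩_H = a_{m,n}·⟨ζ, η⟩_E for all ζ, η ∈ E. Then: (1) if liminf_n a_{n,n}/(n!)² = 0, M_z* is hypercyclic on H; (2) if lim_n a_{n,n}/(n!)² = 0, M_z* is topologically mixing on H. -/

import Mathlib

/-!
Write `T = M_z*` and `e_n η = K_{n,η} / n!`. Since `(z f)⁽ⁿ⁺¹⁾(0) = (n+1) f⁽ⁿ⁾(0)`, `T` is a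
backward shift on these vectors: `T e_{n+1} η = e_n η` and `T e_0 η = 0`, while the quasi-scalar
condition gives `‖e_n η‖² = b_n ‖η‖²` with `b_n = a_{n,n}/(n!)²`. The `e_n η` span a dense
subspace, since a holomorphic function with vanishing Taylor coefficients is zero. On it the
powers `Tⁿ` are eventually zero and have the right inverses `e_r η ↦ e_{n+r} η`, of norm
`√b_{n+r} ‖η‖`. If `b → 0`, these right inverses tend to zero and `T` is mixing. If only
`liminf b = 0`, the bound `b_n ≤ ‖T‖² b_{n+1}` yields times `m_k` along which every shift
`b_{m_k + r}` tends to zero; so `T` is topologically transitive, hence hypercyclic by Baire's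
theorem.
-/

open Metric Filter ContinuousLinearMap
open scoped Nat Topology

theorem exists_dense_range_of_forall_preimage_inter_nonempty {α X : Type*} [TopologicalSpace X]
    [BaireSpace X] [SecondCountableTopology X] [Nonempty X] {f : α → X → X}
    (hf : ∀ n, Continuous (f n))
    (h : ∀ U V : Set X, IsOpen U → IsOpen V → U.Nonempty → V.Nonempty →
      ∃ n, (f n ⁻¹' U ∩ V).Nonempty) :
    ∃ x, Dense (Set.range fun n => f n x) := by
  obtain ⟨B, hBc, hB0, hB⟩ := TopologicalSpace.exists_countable_basis X
  have hdense : ∀ U ∈ B, Dense (⋃ n, f n ⁻¹' U) := by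
    intro U hU
    refine dense_iff_inter_open.mpr fun V hV hVne => ?_
    have hUne : U.Nonempty := Set.nonempty_iff_ne_empty.mpr fun h => hB0 (h ▸ hU)
    obtain ⟨n, x, hxU, hxV⟩ := h U V (hB.isOpen hU) hV hUne hVne
    exact ⟨x, hxV, Set.mem_iUnion.mpr ⟨n, hxU⟩⟩
  obtain ⟨x, hx⟩ := (dense_biInter_of_isOpen
    (fun U hU => isOpen_iUnion fun n => (hB.isOpen hU).preimage (hf n)) hBc hdense).nonempty
  refine ⟨x, hB.dense_iff.mpr fun U hU _ => ?_⟩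
  obtain ⟨n, hn⟩ := Set.mem_iUnion.mp (Set.mem_iInter₂.mp hx U hU)
  exact ⟨f n x, hn, n, rfl⟩

theorem frequently_lt_of_liminf_coe_eq_zero {α : Type*} {l : Filter α} {b : α → ℝ}
    (h : liminf (fun n => (b n : EReal)) l = 0) {δ : ℝ} (hδ : 0 < δ) :
    ∃ᶠ n in l, b n < δ := by
  have hlt : liminf (fun n => (b n : EReal)) l < δ := by rw [h]; exact_mod_cast hδ
  exact (frequently_lt_of_liminf_lt (h := hlt)).mono fun n hn => by exact_mod_cast hn

theorem exists_tendsto_atTop_forall_tendsto_comp_add {b : ℕ → ℝ} {C : ℝ} (hb : ∀ n, 0 ≤ b n)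
    (hC : ∀ n, b n ≤ C * b (n + 1)) (hfreq : ∀ δ > 0, ∃ᶠ n in atTop, b n < δ) :
    ∃ m : ℕ → ℕ, Tendsto m atTop atTop ∧ ∀ r, Tendsto (fun k => b (m k + r)) atTop (𝓝 0) := by
  set c := max C 1
  have hc : 1 ≤ c := le_max_right _ _
  have hwindow : ∀ n d, b n ≤ c ^ d * b (n + d) := by
    intro n d
    induction d with
    | zero => simp
    | succ d ih =>
      calc b n ≤ c ^ d * b (n + d) := ih
        _ ≤ c ^ d * (c * b (n + d + 1)) := by
          gcongr
          exact (hC _).trans (mul_le_mul_of_nonneg_right (le_max_left _ _) (hb _))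
        _ = c ^ (d + 1) * b (n + (d + 1)) := by rw [pow_succ, ← add_assoc]; ring
  -- The factor `c ^ k` absorbs the window inequality over the `k` steps from `n k - k` to `n k`.
  have hsmall : ∀ k : ℕ, ∃ n, 2 * k ≤ n ∧ b n < 1 / ((k + 1) * c ^ k) := fun k =>
    (hfreq _ (by positivity)).forall_exists_of_atTop (2 * k)
  choose n hn hbn using hsmall
  refine ⟨fun k => n k - k,
    tendsto_atTop_mono (fun k => show k ≤ n k - k by have := hn k; omega) tendsto_id, fun r => ?_⟩
  refine tendsto_of_tendsto_of_tendsto_of_le_of_le' tendsto_const_nhds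
    tendsto_one_div_add_atTop_nhds_zero_nat (Eventually.of_forall fun k => hb _) ?_
  filter_upwards [eventually_ge_atTop r] with k hk
  have hbk := (lt_div_iff₀ (by positivity)).mp (hbn k)
  calc b (n k - k + r) ≤ c ^ (k - r) * b (n k - k + r + (k - r)) := hwindow _ _
    _ = c ^ (k - r) * b (n k) := by congr 3; have := hn k; omega
    _ ≤ c ^ k * b (n k) :=
      mul_le_mul_of_nonneg_right (pow_le_pow_right₀ hc (Nat.sub_le k r)) (hb _)
    _ ≤ 1 / (k + 1) := by rw [le_div_iff₀ (by positivity)]; linarith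

section Shift

variable {R X Y : Type*} [Semiring R] [TopologicalSpace X] [AddCommMonoid X] [Module R X]

theorem eventually_nonempty_pow_preimage_inter [ContinuousAdd X] (T : X →L[R] X)
    {l : Filter ℕ} (hl : l ≤ atTop) {Z : Set X} (hZ : Dense Z)
    (hT : ∀ z ∈ Z, Tendsto (fun n => (T ^ n) z) atTop (𝓝 0))
    (hS : ∀ z ∈ Z, ∃ w : ℕ → X, (∀ n, (T ^ n) (w n) = z) ∧ Tendsto w l (𝓝 0))
    {U V : Set X} (hU : IsOpen U) (hV : IsOpen V) (hUne : U.Nonempty) (hVne : V.Nonempty) :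
    ∀ᶠ n in l, (⇑(T ^ n) ⁻¹' U ∩ V).Nonempty := by
  obtain ⟨u, huZ, huU⟩ := hZ.exists_mem_open hU hUne
  obtain ⟨v, hvZ, hvV⟩ := hZ.exists_mem_open hV hVne
  obtain ⟨w, hTw, hw⟩ := hS u huZ
  have hTx : Tendsto (fun n => (T ^ n) (v + w n)) l (𝓝 u) := by
    have h := ((hT v hvZ).mono_left hl).add_const u
    rw [zero_add] at h
    exact h.congr fun n => by rw [map_add, hTw]
  have hx : Tendsto (fun n => v + w n) l (𝓝 v) := by simpa only [add_zero] using hw.const_add v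
  filter_upwards [hTx.eventually (hU.mem_nhds huU), hx.eventually (hV.mem_nhds hvV)]
    with n hnU hnV
  exact ⟨v + w n, hnU, hnV⟩

variable {T : X →L[R] X} {e : ℕ → Y → X}

theorem pow_apply_add_of_shift (hsucc : ∀ n y, T (e (n + 1) y) = e n y) (n r : ℕ) (y : Y) :
    (T ^ n) (e (n + r) y) = e r y := by
  induction n with
  | zero => simp
  | succ n ih => rw [pow_succ, mul_apply_eq_comp, Nat.succ_add, hsucc, ih]

theorem pow_apply_eq_zero_of_shift (hsucc : ∀ n y, T (e (n + 1) y) = e n y)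
    (hzero : ∀ y, T (e 0 y) = 0) {n r : ℕ} (h : r < n) (y : Y) : (T ^ n) (e r y) = 0 := by
  obtain ⟨k, rfl⟩ := Nat.exists_eq_add_of_lt h
  have hr : (T ^ r) (e r y) = e 0 y := by simpa using pow_apply_add_of_shift hsucc r 0 y
  rw [show r + k + 1 = k + 1 + r by omega, pow_add, mul_apply_eq_comp, hr, pow_succ,
    mul_apply_eq_comp, hzero, map_zero]

variable [ContinuousAdd X] [ContinuousConstSMul R X]

theorem tendsto_pow_apply_of_mem_span (hsucc : ∀ n y, T (e (n + 1) y) = e n y)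
    (hzero : ∀ y, T (e 0 y) = 0) {z : X}
    (hz : z ∈ Submodule.span R (Set.range (Function.uncurry e))) :
    Tendsto (fun n => (T ^ n) z) atTop (𝓝 0) := by
  induction hz using Submodule.span_induction with
  | mem x hx =>
    obtain ⟨⟨r, y⟩, rfl⟩ := hx
    exact tendsto_const_nhds.congr' <| (eventually_gt_atTop r).mono fun n hn =>
      (pow_apply_eq_zero_of_shift hsucc hzero hn y).symm
  | zero => simpa only [map_zero] using tendsto_const_nhds
  | add x y _ _ hx hy => simpa only [map_add, add_zero] using hx.add hy
  | smul c x _ hx => simpa only [map_smul, smul_zero] using hx.const_smul c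

theorem exists_pow_right_inverse_of_mem_span (hsucc : ∀ n y, T (e (n + 1) y) = e n y)
    {l : Filter ℕ} (he : ∀ r y, Tendsto (fun n => e (n + r) y) l (𝓝 0)) {z : X}
    (hz : z ∈ Submodule.span R (Set.range (Function.uncurry e))) :
    ∃ w : ℕ → X, (∀ n, (T ^ n) (w n) = z) ∧ Tendsto w l (𝓝 0) := by
  induction hz using Submodule.span_induction with
  | mem x hx =>
    obtain ⟨⟨r, y⟩, rfl⟩ := hx
    exact ⟨fun n => e (n + r) y, fun n => pow_apply_add_of_shift hsucc n r y, he r y⟩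
  | zero => exact ⟨0, fun n => map_zero _, tendsto_const_nhds⟩
  | add x y _ _ hx hy =>
    obtain ⟨w, hw, hw0⟩ := hx
    obtain ⟨w', hw', hw0'⟩ := hy
    exact ⟨fun n => w n + w' n, fun n => by rw [map_add, hw, hw'],
      by simpa only [add_zero] using hw0.add hw0'⟩
  | smul c x _ hx =>
    obtain ⟨w, hw, hw0⟩ := hx
    exact ⟨fun n => c • w n, fun n => by rw [map_smul, hw],
      by simpa only [smul_zero] using hw0.const_smul c⟩

end Shift

theorem iteratedDerivWithin_succ_smul_id_zero {𝕜 F : Type*} [NontriviallyNormedField 𝕜]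
    [NormedAddCommGroup F] [NormedSpace 𝕜 F] {s : Set 𝕜} (hs : UniqueDiffOn 𝕜 s) (h0 : 0 ∈ s)
    {g : 𝕜 → F} {n : ℕ} (hg : ContDiffWithinAt 𝕜 (n + 1) g s 0) :
    iteratedDerivWithin (n + 1) (fun z => z • g z) s 0 =
      ((n + 1 : ℕ) : 𝕜) • iteratedDerivWithin n g s 0 := by
  rw [show (fun z => z • g z) = (fun z : 𝕜 => z) • g from rfl,
    iteratedDerivWithin_smul h0 hs (by fun_prop) (by exact_mod_cast hg),
    Finset.sum_eq_single 1]
  · simp [iteratedDerivWithin_fun_id h0 hs, ← Nat.cast_smul_eq_nsmul 𝕜]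
  · intro i _ hi
    simp [iteratedDerivWithin_fun_id h0 hs, hi]
  · simp

theorem eqOn_zero_of_iteratedDerivWithin_eq_zero {F : Type*} [NormedAddCommGroup F]
    [NormedSpace ℂ F] [CompleteSpace F] {g : ℂ → F} {c : ℂ} {r : ℝ}
    (hg : DifferentiableOn ℂ g (ball c r)) (h : ∀ n, iteratedDerivWithin n g (ball c r) c = 0) :
    Set.EqOn g 0 (ball c r) := by
  intro z hz
  have hc : c ∈ ball c r := mem_ball_self (pos_of_mem_ball hz)
  have hsum := Complex.hasSum_taylorSeries_on_ball hg hz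
  simp only [← iteratedDerivWithin_of_isOpen isOpen_ball hc, h, smul_zero] at hsum
  exact hsum.unique hasSum_zero

section QuasiScalar

variable {H E : Type*} [NormedAddCommGroup H] [InnerProductSpace ℂ H]
  [NormedAddCommGroup E] [InnerProductSpace ℂ E]

def IsDerivKernel (ι : H →ₗ[ℂ] (ℂ → E)) (K : ℕ → E → H) : Prop :=
  ∀ (n : ℕ) (η : E) (f : H),
    inner ℂ f (K n η) = inner ℂ (iteratedDerivWithin n (ι f) (ball (0 : ℂ) 1) 0) η

def IsQuasiScalarDiag (K : ℕ → E → H) (a : ℕ → ℕ → ℂ) : Prop :=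
  ∀ (n : ℕ) (η : E), inner ℂ (K n η) (K n η) = a n n * inner ℂ η η

noncomputable def taylorKernel (K : ℕ → E → H) (n : ℕ) (η : E) : H := (n ! : ℂ)⁻¹ • K n η

noncomputable def kernelWeight (a : ℕ → ℕ → ℂ) (n : ℕ) : ℝ := (a n n).re / (n ! : ℝ) ^ 2

variable {ι : H →ₗ[ℂ] (ℂ → E)} {K : ℕ → E → H}

variable {a : ℕ → ℕ → ℂ}

theorem norm_sq_taylorKernel (ha : IsQuasiScalarDiag K a)
    (n : ℕ) (η : E) : ‖taylorKernel K n η‖ ^ 2 = kernelWeight a n * ‖η‖ ^ 2 := by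
  have hK : ‖K n η‖ ^ 2 = (a n n).re * ‖η‖ ^ 2 := by
    have h := congrArg Complex.re (ha n η)
    rw [inner_self_eq_norm_sq_to_K, inner_self_eq_norm_sq_to_K] at h
    simpa [← Complex.ofReal_pow, Complex.mul_re] using h
  rw [taylorKernel, norm_smul, mul_pow, hK, kernelWeight, norm_inv, Complex.norm_natCast]
  ring

theorem norm_taylorKernel (ha : IsQuasiScalarDiag K a)
    (n : ℕ) (η : E) : ‖taylorKernel K n η‖ = √(kernelWeight a n) * ‖η‖ := by
  rw [← Real.sqrt_sq (norm_nonneg _), norm_sq_taylorKernel ha, Real.sqrt_mul' _ (sq_nonneg _),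
    Real.sqrt_sq (norm_nonneg _)]

theorem kernelWeight_nonneg [Nontrivial E]
    (ha : IsQuasiScalarDiag K a) (n : ℕ) :
    0 ≤ kernelWeight a n := by
  obtain ⟨η, hη⟩ := exists_ne (0 : E)
  have h := norm_sq_taylorKernel ha n η
  exact nonneg_of_mul_nonneg_left (h ▸ sq_nonneg _) (by positivity)

theorem kernelWeight_le_mul [Nontrivial E]
    (ha : IsQuasiScalarDiag K a) {T : H →L[ℂ] H}
    (hsucc : ∀ n η, T (taylorKernel K (n + 1) η) = taylorKernel K n η) (n : ℕ) :
    kernelWeight a n ≤ ‖T‖ ^ 2 * kernelWeight a (n + 1) := by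
  obtain ⟨η, hη⟩ := exists_ne (0 : E)
  have h : ‖taylorKernel K n η‖ ^ 2 ≤ (‖T‖ * ‖taylorKernel K (n + 1) η‖) ^ 2 :=
    pow_le_pow_left₀ (norm_nonneg _) (hsucc n η ▸ T.le_opNorm _) 2
  rw [mul_pow, norm_sq_taylorKernel ha, norm_sq_taylorKernel ha, ← mul_assoc] at h
  exact le_of_mul_le_mul_right h (by positivity)

theorem tendsto_taylorKernel (ha : IsQuasiScalarDiag K a)
    {l : Filter ℕ} {r : ℕ} (hw : Tendsto (fun n => kernelWeight a (n + r)) l (𝓝 0)) (η : E) :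
    Tendsto (fun n => taylorKernel K (n + r) η) l (𝓝 0) := by
  rw [tendsto_zero_iff_norm_tendsto_zero]
  simpa only [norm_taylorKernel ha, Real.sqrt_zero, zero_mul] using hw.sqrt.mul_const ‖η‖

variable [CompleteSpace H]

theorem dense_span_taylorKernel [CompleteSpace E]
    (hinj : ∀ f g : H, Set.EqOn (ι f) (ι g) (ball (0 : ℂ) 1) → f = g)
    (hanal : ∀ f : H, DifferentiableOn ℂ (ι f) (ball (0 : ℂ) 1)) (hK : IsDerivKernel ι K) :
    Dense (Submodule.span ℂ (Set.range (Function.uncurry (taylorKernel K))) : Set H) := by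
  rw [Submodule.dense_iff_topologicalClosure_eq_top, Submodule.topologicalClosure_eq_top_iff,
    Submodule.eq_bot_iff]
  intro f hf
  have hderiv : ∀ n, iteratedDerivWithin n (ι f) (ball (0 : ℂ) 1) 0 = 0 := by
    intro n
    refine (inner_self_eq_zero (𝕜 := ℂ)).mp ?_
    have h := inner_eq_zero_symm.mp <| (Submodule.mem_orthogonal _ f).mp hf _ <|
      Submodule.subset_span ⟨(n, iteratedDerivWithin n (ι f) (ball (0 : ℂ) 1) 0), rfl⟩
    rw [Function.uncurry_apply_pair, taylorKernel, inner_smul_right, hK] at h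
    simpa [Nat.factorial_ne_zero] using h
  refine hinj f 0 fun w hw => ?_
  rw [map_zero]
  exact eqOn_zero_of_iteratedDerivWithin_eq_zero (hanal f) hderiv hw

variable {Mz : H →L[ℂ] H}

theorem adjoint_taylorKernel_succ [CompleteSpace E]
    (hanal : ∀ f : H, DifferentiableOn ℂ (ι f) (ball (0 : ℂ) 1))
    (hMz : ∀ f : H, ∀ w ∈ ball (0 : ℂ) 1, ι (Mz f) w = w • ι f w) (hK : IsDerivKernel ι K)
    (n : ℕ) (η : E) : adjoint Mz (taylorKernel K (n + 1) η) = taylorKernel K n η := by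
  have h0 : (0 : ℂ) ∈ ball (0 : ℂ) 1 := mem_ball_self one_pos
  refine ext_inner_left ℂ fun f => ?_
  have hderiv : iteratedDerivWithin (n + 1) (ι (Mz f)) (ball 0 1) 0 =
      ((n + 1 : ℕ) : ℂ) • iteratedDerivWithin n (ι f) (ball 0 1) 0 := by
    rw [iteratedDerivWithin_congr (hMz f) h0]
    exact iteratedDerivWithin_succ_smul_id_zero isOpen_ball.uniqueDiffOn h0
      (((hanal f).contDiffOn isOpen_ball).contDiffWithinAt h0)
  rw [adjoint_inner_right, taylorKernel, taylorKernel, inner_smul_right, inner_smul_right, hK, hK,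
    hderiv, inner_smul_left, Nat.factorial_succ]
  simp only [Nat.cast_mul, Nat.cast_add, Nat.cast_one, mul_inv_rev, map_add, map_natCast, map_one]
  field_simp

theorem adjoint_taylorKernel_zero
    (hMz : ∀ f : H, ∀ w ∈ ball (0 : ℂ) 1, ι (Mz f) w = w • ι f w) (hK : IsDerivKernel ι K)
    (η : E) : adjoint Mz (taylorKernel K 0 η) = 0 := by
  refine ext_inner_left ℂ fun f => ?_
  rw [adjoint_inner_right, taylorKernel, inner_smul_right, hK, iteratedDerivWithin_zero,
    hMz f 0 (mem_ball_self one_pos), zero_smul, inner_zero_left, mul_zero, inner_zero_right]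

end QuasiScalar

theorem stmt9_general {H E : Type*}
    [NormedAddCommGroup H] [InnerProductSpace ℂ H] [CompleteSpace H]
    [TopologicalSpace.SeparableSpace H]
    [NormedAddCommGroup E] [InnerProductSpace ℂ E] [CompleteSpace E] [Nontrivial E]
    (ι : H →ₗ[ℂ] (ℂ → E))
    (hinj : ∀ f g : H, Set.EqOn (ι f) (ι g) (ball (0 : ℂ) 1) → f = g)
    (hanal : ∀ f : H, DifferentiableOn ℂ (ι f) (ball (0 : ℂ) 1))
    (Mz : H →L[ℂ] H)
    (hMz : ∀ f : H, ∀ w ∈ ball (0 : ℂ) 1, ι (Mz f) w = w • ι f w)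
    (K : ℕ → E → H)
    (hK : ∀ (n : ℕ) (η : E) (f : H),
      (inner ℂ f (K n η) : ℂ) =
        (inner ℂ (iteratedDerivWithin n (ι f) (ball (0 : ℂ) 1) 0) η : ℂ))
    (a : ℕ → ℕ → ℂ)
    (ha : ∀ (m n : ℕ) (ζ η : E),
      (inner ℂ (K m ζ) (K n η) : ℂ) = a m n * (inner ℂ ζ η : ℂ)) :
    (liminf (fun n : ℕ => (((a n n).re / (n.factorial : ℝ) ^ 2 : ℝ) : EReal)) atTop = 0 →
      ∃ g : H, Dense (Set.range fun m : ℕ => ((adjoint Mz) ^ m) g)) ∧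
    (Tendsto (fun n : ℕ => (a n n).re / (n.factorial : ℝ) ^ 2) atTop (nhds 0) →
      ∀ U V : Set H, IsOpen U → IsOpen V → U.Nonempty → V.Nonempty →
        ∃ N : ℕ, ∀ j ≥ N, ((((adjoint Mz) ^ j) ⁻¹' U) ∩ V).Nonempty) := by
  have hsucc := adjoint_taylorKernel_succ hanal hMz hK
  have hdiag : IsQuasiScalarDiag K a := fun n η => ha n n η η
  have htransitive : ∀ l ≤ atTop, (∀ r, Tendsto (fun n => kernelWeight a (n + r)) l (𝓝 0)) →
      ∀ U V : Set H, IsOpen U → IsOpen V → U.Nonempty → V.Nonempty →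
        ∀ᶠ n in l, (⇑(adjoint Mz ^ n) ⁻¹' U ∩ V).Nonempty :=
    fun l hl hw U V hU hV hUne hVne =>
      eventually_nonempty_pow_preimage_inter (adjoint Mz) hl
        (dense_span_taylorKernel hinj hanal hK)
        (fun _ hz => tendsto_pow_apply_of_mem_span hsucc (adjoint_taylorKernel_zero hMz hK) hz)
        (fun _ hz => exists_pow_right_inverse_of_mem_span hsucc
          (fun r => tendsto_taylorKernel hdiag (hw r)) hz)
        hU hV hUne hVne
  refine ⟨fun h => ?_, fun h U V hU hV hUne hVne => eventually_atTop.mp <|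
    htransitive atTop le_rfl (fun r => h.comp (tendsto_add_atTop_nat r)) U V hU hV hUne hVne⟩
  obtain ⟨m, hm, hmw⟩ := exists_tendsto_atTop_forall_tendsto_comp_add
    (kernelWeight_nonneg hdiag) (kernelWeight_le_mul hdiag hsucc)
    (fun _ hδ => frequently_lt_of_liminf_coe_eq_zero (b := kernelWeight a) h hδ)
  have := UniformSpace.secondCountable_of_separable H
  exact exists_dense_range_of_forall_preimage_inter_nonempty (fun n => (adjoint Mz ^ n).continuous)
    fun U V hU hV hUne hVne => (htransitive (map m atTop) hm
      (fun r => tendsto_map'_iff.mpr (hmw r)) U V hU hV hUne hVne).exists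

/-- Quasi-scalar case: suppose the kernel of the analytic reproducing kernel Hilbert
space `H` of `E`-valued functions (`E ≠ 0`) has the form `K(z,w) = k(z,w)·I_E`, expressed
through `⟨K_{m,ζ}, K_{n,η}⟩ = a m n · ⟨ζ, η⟩` for scalars `a m n` (which are nonnegative
reals on the diagonal). If `M_z` is bounded on `H`, then:
(1) `liminf_n a n n/(n!)² = 0` implies `M_z*` is hypercyclic;
(2) `lim_n a n n/(n!)² = 0` implies `M_z*` is topologically mixing. -/
theorem stmt9 {H E : Type*}
    [NormedAddCommGroup H] [InnerProductSpace ℂ H] [CompleteSpace H]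
    [TopologicalSpace.SeparableSpace H]
    [NormedAddCommGroup E] [InnerProductSpace ℂ E] [CompleteSpace E] [Nontrivial E]
    (ι : H →ₗ[ℂ] (ℂ → E))
    (hinj : ∀ f g : H, Set.EqOn (ι f) (ι g) (ball (0 : ℂ) 1) → f = g)
    (hanal : ∀ f : H, DifferentiableOn ℂ (ι f) (ball (0 : ℂ) 1))
    (heval : ∀ w ∈ ball (0 : ℂ) 1, Continuous fun f : H => ι f w)
    (Mz : H →L[ℂ] H)
    (hMz : ∀ f : H, ∀ w ∈ ball (0 : ℂ) 1, ι (Mz f) w = w • ι f w)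
    (K : ℕ → E → H)
    (hK : ∀ (n : ℕ) (η : E) (f : H),
      (inner ℂ f (K n η) : ℂ) =
        (inner ℂ (iteratedDerivWithin n (ι f) (ball (0 : ℂ) 1) 0) η : ℂ))
    (a : ℕ → ℕ → ℂ)
    (ha : ∀ (m n : ℕ) (ζ η : E),
      (inner ℂ (K m ζ) (K n η) : ℂ) = a m n * (inner ℂ ζ η : ℂ)) :
    (liminf (fun n : ℕ => (((a n n).re / (n.factorial : ℝ) ^ 2 : ℝ) : EReal)) atTop = 0 →
      ∃ g : H, Dense (Set.range fun m : ℕ => ((adjoint Mz) ^ m) g)) ∧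
    (Tendsto (fun n : ℕ => (a n n).re / (n.factorial : ℝ) ^ 2) atTop (nhds 0) →
      ∀ U V : Set H, IsOpen U → IsOpen V → U.Nonempty → V.Nonempty →
        ∃ N : ℕ, ∀ j ≥ N, ((((adjoint Mz) ^ j) ⁻¹' U) ∩ V).Nonempty) :=
  stmt9_general ι hinj hanal Mz hMz K hK a ha
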